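/- (Sector-sum bound.) For every real M ≥ 2 there exists a constant c > 0 such that for every integer i ≥ 1 and every fixed sector σ_4 ∈ S_i, one has ∑_{σ_1, σ_2, σ_3 ∈ S_i} χ(σ_1, σ_2, σ_3, σ_4) · M^{−(l(σ_1) + l(σ_2) + l(σ_3))/4} ≤ c · i, where S_i = {(s_+, s_−) ∈ ℕ × ℕ : s_+ ≤ i, s_− ≤ i, s_+ + s_− ≥ i − 2}, the depth is l(σ) = s_+ + s_− − i + 2, and χ(σ_1, σ_2, σ_3, σ_4) equals 1 if both of the following hold and 0 otherwise: the two smallest values among s_{1,+}, s_{2,+}, s_{3,+}, s_{4,+} differ by at most one unit, and the two smallest values among s_{1,−}, s_{2,−}, s_{3,−}, s_{4,−} differ by at most one unit. -/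
import Mathlib


/-- The set of sectors of the `i`-th renormalization group slice:
pairs `σ = (s₊, s₋)` of naturals with `s₊ ≤ i`, `s₋ ≤ i` and `s₊ + s₋ ≥ i - 2`. -/
def sectorFinset (i : ℕ) : Finset (ℕ × ℕ) :=
  (Finset.range (i + 1) ×ˢ Finset.range (i + 1)).filter fun σ => i ≤ σ.1 + σ.2 + 2

/-- The depth `l(σ) = s₊ + s₋ - i + 2` of a sector, as a real number. -/
def sectorDepth (i : ℕ) (σ : ℕ × ℕ) : ℝ := (σ.1 : ℝ) + (σ.2 : ℝ) - (i : ℝ) + 2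

/-- The two smallest among the four naturals `a, b, c, d` differ by at most one unit:
at least two of them are `≤ min + 1`. -/
def twoSmallestClose (a b c d : ℕ) : Bool :=
  decide (2 ≤ (([a, b, c, d].filter
    fun x => decide (x ≤ min (min a b) (min c d) + 1)).length))

/-- The momentum conservation constraint `χ(σ₁, σ₂, σ₃, σ₄)`: equal to `1` if in each
tilted direction the two smallest of the four sector indices differ by at most one unit,
and `0` otherwise. -/
noncomputable def chi (σ1 σ2 σ3 σ4 : ℕ × ℕ) : ℝ :=
  if twoSmallestClose σ1.1 σ2.1 σ3.1 σ4.1 && twoSmallestClose σ1.2 σ2.2 σ3.2 σ4.2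
  then 1 else 0

/- ------------------------------------------------------------------------ -/
/- Auxiliary material for the proof.                                        -/
/- ------------------------------------------------------------------------ -/

lemma mem_sector {i : ℕ} {σ : ℕ × ℕ} :
    σ ∈ sectorFinset i ↔ σ.1 ≤ i ∧ σ.2 ≤ i ∧ i ≤ σ.1 + σ.2 + 2 := by
  simp only [sectorFinset, Finset.mem_filter, Finset.mem_product, Finset.mem_range,
    Nat.lt_succ_iff]
  tauto

lemma tsc_cases {a b c d : ℕ} (h : twoSmallestClose a b c d = true) :
    ∃ m : ℕ, m ≤ a ∧ m ≤ b ∧ m ≤ c ∧ m ≤ d ∧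
    ((a ≤ m + 1 ∧ b ≤ m + 1) ∨ (a ≤ m + 1 ∧ c ≤ m + 1) ∨ (a ≤ m + 1 ∧ d ≤ m + 1) ∨
     (b ≤ m + 1 ∧ c ≤ m + 1) ∨ (b ≤ m + 1 ∧ d ≤ m + 1) ∨ (c ≤ m + 1 ∧ d ≤ m + 1)) := by
  simp only [twoSmallestClose, decide_eq_true_eq] at h
  refine ⟨min (min a b) (min c d), by omega, by omega, by omega, by omega, ?_⟩
  set m := min (min a b) (min c d) with hm
  simp only [List.filter_cons, List.filter_nil, decide_eq_true_eq] at h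
  split_ifs at h <;> simp at h <;> tauto

/-- `x` is within `s+5` of one of the bases `z`, `t`, `i+d-2-u`. -/
def good (i s t u d z x : ℕ) : Prop :=
  (z ≤ x + (s+5) ∧ x ≤ z + (s+5)) ∨
  (t ≤ x + (s+5) ∧ x ≤ t + (s+5)) ∨
  (i + d ≤ x + u + s + 7 ∧ x + u + 2 ≤ i + d + (s+5))

set_option maxHeartbeats 1000000 in
/-- The key combinatorial fact: for a `χ`-compatible configuration, there is one free
number `z ≤ i` such that each of the three horizontal sector indices is within `s+5`
of one of the bases `z`, `t = σ₄.1`, `i + dᵣ - 2 - u` (`u = σ₄.2`). -/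
lemma core (i s t u x1 y1 x2 y2 x3 y3 d1 d2 d3 : ℕ)
    (hx1 : x1 ≤ i) (hy1 : y1 ≤ i) (hx2 : x2 ≤ i) (hy2 : y2 ≤ i)
    (hx3 : x3 ≤ i) (hy3 : y3 ≤ i)
    (ht : t ≤ i) (hu : u ≤ i) (htu : i ≤ t + u + 2)
    (hd1 : x1 + y1 + 2 = i + d1) (hd2 : x2 + y2 + 2 = i + d2) (hd3 : x3 + y3 + 2 = i + d3)
    (hs : d1 + d2 + d3 = s)
    (hA : twoSmallestClose x1 x2 x3 t = true)
    (hB : twoSmallestClose y1 y2 y3 u = true) :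
    ∃ z ≤ i, good i s t u d1 z x1 ∧ good i s t u d2 z x2 ∧ good i s t u d3 z x3 := by
  obtain ⟨a, ha1, ha2, ha3, ha4, hA'⟩ := tsc_cases hA
  obtain ⟨b, hb1, hb2, hb3, hb4, hB'⟩ := tsc_cases hB
  unfold good
  rcases hA' with ⟨hp1,hp2⟩|⟨hp1,hp2⟩|⟨hp1,hp2⟩|⟨hp1,hp2⟩|⟨hp1,hp2⟩|⟨hp1,hp2⟩ <;>
  rcases hB' with ⟨hq1,hq2⟩|⟨hq1,hq2⟩|⟨hq1,hq2⟩|⟨hq1,hq2⟩|⟨hq1,hq2⟩|⟨hq1,hq2⟩ <;>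
  first
  | exact ⟨x1, hx1, by omega, by omega, by omega⟩
  | exact ⟨x2, hx2, by omega, by omega, by omega⟩
  | exact ⟨0, Nat.zero_le _, by omega, by omega, by omega⟩
  | exact ⟨x3, hx3, by omega, by omega, by omega⟩

/-- Reconstruct a sector from base choice `k`, free number `z`, offset `e`, depth `d`. -/
def reconPair (i t u s d z k e : ℕ) : ℕ × ℕ :=
  let base : ℤ := if k = 0 then z else if k = 1 then t else (i + d - 2 - u)
  let x : ℤ := base + e - (s + 6)
  (x.toNat, ((i : ℤ) + d - 2 - x).toNat)

lemma reconPair_spec (i t u s d z x y : ℕ) (hxy : x + y + 2 = i + d)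
    (hg : good i s t u d z x) :
    ∃ k < 3, ∃ e < 2*s+13, reconPair i t u s d z k e = (x, y) := by
  rcases hg with ⟨h1,h2⟩|⟨h1,h2⟩|⟨h1,h2⟩
  · refine ⟨0, by norm_num, (x + (s+6) - z), by omega, ?_⟩
    simp only [reconPair, Prod.mk.injEq]
    norm_num
    omega
  · refine ⟨1, by norm_num, (x + (s+6) - t), by omega, ?_⟩
    simp only [reconPair, Prod.mk.injEq]
    norm_num
    omega
  · refine ⟨2, by norm_num, ((x : ℤ) + (s+6) - ((i : ℤ) + d - 2 - u)).toNat, by omega, ?_⟩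
    simp only [reconPair, Prod.mk.injEq]
    norm_num
    omega

/-- The depth of a sector, as a natural number. -/
def dn (i : ℕ) (σ : ℕ × ℕ) : ℕ := σ.1 + σ.2 + 2 - i

/-- Reconstruction of a triple of sectors from the data
`(k1, k2, k3, z, e1, e2, e3, d1, d2)`. -/
def recon (i t u s : ℕ) (w : ℕ × ℕ × ℕ × ℕ × ℕ × ℕ × ℕ × ℕ × ℕ) :
    (ℕ × ℕ) × (ℕ × ℕ) × (ℕ × ℕ) :=
  (reconPair i t u s w.2.2.2.2.2.2.2.1 w.2.2.2.1 w.1 w.2.2.2.2.1,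
   reconPair i t u s w.2.2.2.2.2.2.2.2 w.2.2.2.1 w.2.1 w.2.2.2.2.2.1,
   reconPair i t u s (s - w.2.2.2.2.2.2.2.1 - w.2.2.2.2.2.2.2.2) w.2.2.2.1 w.2.2.1
     w.2.2.2.2.2.2.1)

lemma card_bound (i s : ℕ) (σ4 : ℕ × ℕ) (hσ4 : σ4 ∈ sectorFinset i) :
    ((sectorFinset i ×ˢ sectorFinset i ×ˢ sectorFinset i).filter
      (fun p => (dn i p.1 + dn i p.2.1 + dn i p.2.2 = s ∧
        (twoSmallestClose p.1.1 p.2.1.1 p.2.2.1 σ4.1 &&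
         twoSmallestClose p.1.2 p.2.1.2 p.2.2.2 σ4.2) = true))).card
      ≤ 27 * (i+1) * (2*s+13)^3 * (s+1)^2 := by
  classical
  obtain ⟨h41, h42, h43⟩ := mem_sector.mp hσ4
  set D : Finset (ℕ × ℕ × ℕ × ℕ × ℕ × ℕ × ℕ × ℕ × ℕ) :=
    Finset.range 3 ×ˢ Finset.range 3 ×ˢ Finset.range 3 ×ˢ Finset.range (i+1) ×ˢ
    Finset.range (2*s+13) ×ˢ Finset.range (2*s+13) ×ˢ Finset.range (2*s+13) ×ˢ
    Finset.range (s+1) ×ˢ Finset.range (s+1) with hD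
  have hcard : D.card = 27 * (i+1) * (2*s+13)^3 * (s+1)^2 := by
    simp [hD, Finset.card_product]
    ring
  rw [← hcard]
  apply Finset.card_le_card_of_surjOn (recon i σ4.1 σ4.2 s)
  intro p hp
  simp only [Finset.coe_filter, Set.mem_setOf_eq, Finset.mem_coe, Finset.mem_product] at hp
  obtain ⟨⟨hp1, hp2, hp3⟩, hsum, hχ⟩ := hp
  obtain ⟨hx1, hy1, hz1⟩ := mem_sector.mp hp1
  obtain ⟨hx2, hy2, hz2⟩ := mem_sector.mp hp2
  obtain ⟨hx3, hy3, hz3⟩ := mem_sector.mp hp3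
  rw [Bool.and_eq_true] at hχ
  have hd1 : p.1.1 + p.1.2 + 2 = i + dn i p.1 := by simp [dn]; omega
  have hd2 : p.2.1.1 + p.2.1.2 + 2 = i + dn i p.2.1 := by simp [dn]; omega
  have hd3 : p.2.2.1 + p.2.2.2 + 2 = i + dn i p.2.2 := by simp [dn]; omega
  obtain ⟨z, hz, hg1, hg2, hg3⟩ := core i s σ4.1 σ4.2 p.1.1 p.1.2 p.2.1.1 p.2.1.2
    p.2.2.1 p.2.2.2 (dn i p.1) (dn i p.2.1) (dn i p.2.2)
    hx1 hy1 hx2 hy2 hx3 hy3 h41 h42 h43 hd1 hd2 hd3 hsum hχ.1 hχ.2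
  obtain ⟨k1, hk1, e1, he1, hr1⟩ := reconPair_spec i σ4.1 σ4.2 s (dn i p.1) z _ _ hd1 hg1
  obtain ⟨k2, hk2, e2, he2, hr2⟩ := reconPair_spec i σ4.1 σ4.2 s (dn i p.2.1) z _ _ hd2 hg2
  obtain ⟨k3, hk3, e3, he3, hr3⟩ := reconPair_spec i σ4.1 σ4.2 s (dn i p.2.2) z _ _ hd3 hg3
  refine ⟨(k1, k2, k3, z, e1, e2, e3, dn i p.1, dn i p.2.1), ?_, ?_⟩
  · simp only [hD, Finset.coe_product, Set.mem_prod, Finset.mem_coe, Finset.mem_range]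
    refine ⟨hk1, hk2, hk3, by omega, he1, he2, he3, by omega, by omega⟩
  · have hd3' : s - dn i p.1 - dn i p.2.1 = dn i p.2.2 := by omega
    simp only [recon, hd3']
    rw [hr1, hr2, hr3]

lemma depth_cast {i : ℕ} {σ : ℕ × ℕ} (h : σ ∈ sectorFinset i) :
    sectorDepth i σ = (dn i σ : ℝ) := by
  obtain ⟨h1, h2, h3⟩ := mem_sector.mp h
  simp only [sectorDepth, dn]
  rw [Nat.cast_sub h3]
  push_cast
  ring

set_option maxHeartbeats 2000000 in
/-- Sector-sum bound (Lemma 5): for fixed `σ₄`, the sum over the other three sectors of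
`χ(σ₁, σ₂, σ₃, σ₄) M^{-(l(σ₁)+l(σ₂)+l(σ₃))/4}` is at most `c·i`. -/
theorem sector_sum_bound (M : ℝ) (hM : 2 ≤ M) :
    ∃ c : ℝ, 0 < c ∧ ∀ i : ℕ, 1 ≤ i → ∀ σ4 ∈ sectorFinset i,
      ∑ σ1 ∈ sectorFinset i, ∑ σ2 ∈ sectorFinset i, ∑ σ3 ∈ sectorFinset i,
        chi σ1 σ2 σ3 σ4 *
          M ^ (-(sectorDepth i σ1 + sectorDepth i σ2 + sectorDepth i σ3) / 4) ≤
        c * i := by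
  classical
  have hM0 : (0:ℝ) < M := by linarith
  obtain ⟨q, hq⟩ : ∃ q : ℝ, q = M ^ (-(1:ℝ)/4) := ⟨_, rfl⟩
  have hq0 : 0 < q := hq ▸ Real.rpow_pos_of_pos hM0 _
  have hq1 : q < 1 := hq ▸ Real.rpow_lt_one_of_one_lt_of_neg (by linarith) (by norm_num)
  have hsum0 : Summable (fun n : ℕ => (n:ℝ)^5 * q^n) :=
    summable_pow_mul_geometric_of_norm_lt_one 5
      (by rw [Real.norm_eq_abs, abs_of_pos hq0]; exact hq1)
  have hsum : Summable (fun n : ℕ => ((n:ℝ)+1)^5 * q^n) := by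
    have h1 : Summable (fun n : ℕ => ((n+1:ℕ):ℝ)^5 * q^(n+1)) :=
      (summable_nat_add_iff 1).2 hsum0
    have h2 := h1.mul_left q⁻¹
    have hqne : q ≠ 0 := ne_of_gt hq0
    refine h2.congr fun n => ?_
    have hcast : ((n+1:ℕ):ℝ) = (n:ℝ)+1 := by push_cast; ring
    rw [hcast, pow_succ q n, show q⁻¹ * (((n:ℝ)+1)^5 * (q^n * q)) = ((n:ℝ)+1)^5 * q^n * (q⁻¹ * q)
      from by ring, inv_mul_cancel₀ hqne, mul_one]
  set C : ℝ := ∑' n : ℕ, ((n:ℝ)+1)^5 * q^n with hC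
  have hC0 : 0 ≤ C := tsum_nonneg (fun n => mul_nonneg (by positivity) (pow_nonneg hq0.le n))
  refine ⟨59319 * 2 * (C+1), by linarith, ?_⟩
  intro i hi σ4 hσ4
  set S := sectorFinset i with hS
  have step1 : (∑ σ1 ∈ S, ∑ σ2 ∈ S, ∑ σ3 ∈ S,
      chi σ1 σ2 σ3 σ4 * M ^ (-(sectorDepth i σ1 + sectorDepth i σ2 + sectorDepth i σ3) / 4))
      = ∑ p ∈ S ×ˢ S ×ˢ S,
        chi p.1 p.2.1 p.2.2 σ4 *
          M ^ (-(sectorDepth i p.1 + sectorDepth i p.2.1 + sectorDepth i p.2.2) / 4) := by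
    rw [Finset.sum_product]
    exact Finset.sum_congr rfl fun a _ => by rw [Finset.sum_product]
  rw [step1]
  have hmaps : ∀ p ∈ S ×ˢ S ×ˢ S,
      dn i p.1 + dn i p.2.1 + dn i p.2.2 ∈ Finset.range (3*i+7) := by
    intro p hp
    simp only [Finset.mem_product] at hp
    obtain ⟨h1, h2, h3⟩ := hp
    have := mem_sector.mp h1
    have := mem_sector.mp h2
    have := mem_sector.mp h3
    simp only [Finset.mem_range, dn]
    omega
  rw [← Finset.sum_fiberwise_of_maps_to hmaps]
  have step3 : ∀ s ∈ Finset.range (3*i+7),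
      (∑ p ∈ (S ×ˢ S ×ˢ S).filter
          (fun p => dn i p.1 + dn i p.2.1 + dn i p.2.2 = s),
        chi p.1 p.2.1 p.2.2 σ4 *
          M ^ (-(sectorDepth i p.1 + sectorDepth i p.2.1 + sectorDepth i p.2.2) / 4))
      ≤ 59319 * (i+1) * (((s:ℝ)+1)^5 * q^s) := by
    intro s _
    have hterm : ∀ p ∈ (S ×ˢ S ×ˢ S).filter
        (fun p => dn i p.1 + dn i p.2.1 + dn i p.2.2 = s),
        chi p.1 p.2.1 p.2.2 σ4 *
          M ^ (-(sectorDepth i p.1 + sectorDepth i p.2.1 + sectorDepth i p.2.2) / 4)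
        = if ((twoSmallestClose p.1.1 p.2.1.1 p.2.2.1 σ4.1 &&
              twoSmallestClose p.1.2 p.2.1.2 p.2.2.2 σ4.2) = true) then q^s else 0 := by
      intro p hp
      simp only [Finset.mem_filter, Finset.mem_product] at hp
      obtain ⟨⟨h1, h2, h3⟩, hsum'⟩ := hp
      have hpow : M ^ (-(sectorDepth i p.1 + sectorDepth i p.2.1 + sectorDepth i p.2.2) / 4)
          = q ^ s := by
        rw [depth_cast h1, depth_cast h2, depth_cast h3, hq,
          ← Real.rpow_natCast (M ^ (-(1:ℝ)/4)) s, ← Real.rpow_mul hM0.le]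
        congr 1
        rw [← hsum']
        push_cast
        ring
      rw [hpow, chi]
      split_ifs with h
      · rw [one_mul]
      · rw [zero_mul]
    rw [Finset.sum_congr rfl hterm, Finset.sum_ite, Finset.sum_const_zero, add_zero,
      Finset.sum_const, nsmul_eq_mul, Finset.filter_filter]
    have hcard := card_bound i s σ4 hσ4
    have hq's : (0:ℝ) < q^s := pow_pos hq0 s
    calc (((S ×ˢ S ×ˢ S).filter fun p => dn i p.1 + dn i p.2.1 + dn i p.2.2 = s ∧
            (twoSmallestClose p.1.1 p.2.1.1 p.2.2.1 σ4.1 &&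
             twoSmallestClose p.1.2 p.2.1.2 p.2.2.2 σ4.2) = true).card : ℝ) * q^s
        ≤ (27 * (i+1) * (2*s+13)^3 * (s+1)^2 : ℕ) * q^s := by
          apply mul_le_mul_of_nonneg_right _ hq's.le
          exact_mod_cast hcard
      _ ≤ 59319 * (i+1) * (((s:ℝ)+1)^5 * q^s) := by
          rw [← mul_assoc]
          apply mul_le_mul_of_nonneg_right _ hq's.le
          push_cast
          have h13 : (2*(s:ℝ)+13)^3 ≤ (13*((s:ℝ)+1))^3 := by
            apply pow_le_pow_left₀ (by positivity) (by linarith)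
          have hi0 : (0:ℝ) ≤ 27 * ((i:ℝ)+1) := by positivity
          have h1 : (2*(s:ℝ)+13)^3 * ((s:ℝ)+1)^2 ≤ (13*((s:ℝ)+1))^3 * ((s:ℝ)+1)^2 :=
            mul_le_mul_of_nonneg_right h13 (by positivity)
          calc 27 * ((i:ℝ)+1) * (2*(s:ℝ)+13)^3 * ((s:ℝ)+1)^2
              = (27 * ((i:ℝ)+1)) * ((2*(s:ℝ)+13)^3 * ((s:ℝ)+1)^2) := by ring
            _ ≤ (27 * ((i:ℝ)+1)) * ((13*((s:ℝ)+1))^3 * ((s:ℝ)+1)^2) :=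
                mul_le_mul_of_nonneg_left h1 hi0
            _ = 59319 * ((i:ℝ)+1) * ((s:ℝ)+1)^5 := by ring
  calc (∑ s ∈ Finset.range (3*i+7), ∑ p ∈ (S ×ˢ S ×ˢ S).filter
          (fun p => dn i p.1 + dn i p.2.1 + dn i p.2.2 = s),
        chi p.1 p.2.1 p.2.2 σ4 *
          M ^ (-(sectorDepth i p.1 + sectorDepth i p.2.1 + sectorDepth i p.2.2) / 4))
      ≤ ∑ s ∈ Finset.range (3*i+7), 59319 * ((i:ℝ)+1) * (((s:ℝ)+1)^5 * q^s) :=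
        Finset.sum_le_sum step3
    _ = 59319 * ((i:ℝ)+1) * ∑ s ∈ Finset.range (3*i+7), (((s:ℝ)+1)^5 * q^s) := by
        rw [Finset.mul_sum]
    _ ≤ 59319 * ((i:ℝ)+1) * C := by
        apply mul_le_mul_of_nonneg_left _ (by positivity)
        exact Summable.sum_le_tsum _ (fun n _ => by positivity) hsum
    _ ≤ 59319 * 2 * (C+1) * i := by
        have hii : ((i:ℝ)+1) ≤ 2*i := by
          have : (1:ℝ) ≤ i := by exact_mod_cast hi
          linarith
        have h1 : 59319 * ((i:ℝ)+1) * C ≤ 59319 * (2*(i:ℝ)) * (C+1) := by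
          apply mul_le_mul
          · apply mul_le_mul_of_nonneg_left hii (by norm_num)
          · linarith
          · exact hC0
          · positivity
        linarith [h1]
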